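/- Let n ≥ 3 be an integer. Suppose h₁₁, h_{1i} (i = 2, …, n), and h_{ij} = h_{ji} (i, j = 2, …, n), all twice differentiable functions on (0,∞), satisfy the system: (I) r²·(r²h₁₁)'' + n·r·(r²h₁₁)' − 2(n−1)·(r²h₁₁) = 0; (II) r²·h_{1i}'' + n·r·h_{1i}' − n·h_{1i} = 0; (III) r²·(r^{−2}h_{ij})'' + n·r·(r^{−2}h_{ij})' − 2·δ_{ij}·Σ_{k=2}^n r^{−2}h_{kk} = 0. If the bounds r²·|h₁₁(r)| ≤ r^{0.1}, |h_{1i}(r)| ≤ r^{0.1}, and r^{−2}·|h_{ij}(r)| ≤ r^{0.1} hold for all r > 0 (or alternatively the bounds with r^{0.1} replaced by r^{−0.1} hold for all r > 0), then all the functions h₁₁, h_{1i}, h_{ij} vanish identically. -/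

import Mathlib

/-!
Each of (I), (II), (III) is an Euler equation `r² u'' + p r u' + q u = 0`, whose solutions on
`(0, ∞)` are `A r^a + B r^b` with `a ≠ b` the real roots of the indicial polynomial
`λ² + (p - 1) λ + q`. A bound `|u| ≤ C r^β` with `β` not an indicial root forces `A = B = 0`:
compare growth as `r → ∞` or `r → 0`. In (III) the trace `∑ₖ r⁻² hₖₖ` satisfies an Euler equation
of its own, so it vanishes and the system decouples. The exponents `±0.1` are never indicial roots.
-/

open Real Filter Set Topology

section PowerBounds

variable {a b β A B C : ℝ}

lemma tendsto_rpow_atTop_of_neg (ha : a < 0) : Tendsto (fun r : ℝ => r ^ a) atTop (𝓝 0) := by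
  simpa using tendsto_rpow_neg_atTop (neg_pos.2 ha)

lemma eq_zero_of_abs_add_rpow_le_of_lt (hab : a < b) (hβ : β < b)
    (h : ∀ r > (0 : ℝ), |A * r ^ a + B * r ^ b| ≤ C * r ^ β) : B = 0 := by
  have hlhs : Tendsto (fun r : ℝ => |A * r ^ (a - b) + B|) atTop (𝓝 |A * 0 + B|) :=
    (((tendsto_rpow_atTop_of_neg (sub_neg.2 hab)).const_mul A).add_const B).abs
  have hrhs : Tendsto (fun r : ℝ => C * r ^ (β - b)) atTop (𝓝 (C * 0)) :=
    (tendsto_rpow_atTop_of_neg (sub_neg.2 hβ)).const_mul C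
  have hle : ∀ᶠ r in atTop, |A * r ^ (a - b) + B| ≤ C * r ^ (β - b) := by
    filter_upwards [eventually_gt_atTop 0] with r hr
    have hrb : 0 < r ^ b := rpow_pos_of_pos hr b
    have hdiv : A * r ^ (a - b) + B = (A * r ^ a + B * r ^ b) / r ^ b := by
      rw [rpow_sub hr]
      field_simp
    calc |A * r ^ (a - b) + B| = |A * r ^ a + B * r ^ b| / r ^ b := by
          rw [hdiv, abs_div, abs_of_pos hrb]
      _ ≤ C * r ^ β / r ^ b := by gcongr; exact h r hr
      _ = C * r ^ (β - b) := by rw [rpow_sub hr, mul_div_assoc]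
  simpa using le_of_tendsto_of_tendsto hlhs hrhs hle

lemma eq_zero_of_abs_add_rpow_le_of_gt (hab : a < b) (hβ : a < β)
    (h : ∀ r > (0 : ℝ), |A * r ^ a + B * r ^ b| ≤ C * r ^ β) : A = 0 :=
  eq_zero_of_abs_add_rpow_le_of_lt (neg_lt_neg hab) (neg_lt_neg hβ) fun r hr => by
    simpa [add_comm, inv_rpow hr.le, rpow_neg hr.le] using h r⁻¹ (inv_pos.2 hr)

lemma eq_zero_of_abs_mul_rpow_le (ha : a ≠ β) (h : ∀ r > (0 : ℝ), |A * r ^ a| ≤ C * r ^ β) :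
    A = 0 := by
  rcases ha.lt_or_gt with ha | ha
  · exact eq_zero_of_abs_add_rpow_le_of_gt (b := β) (B := 0) ha ha (by simpa using h)
  · exact eq_zero_of_abs_add_rpow_le_of_lt (a := β) (A := 0) ha ha (by simpa using h)

lemma eq_zero_of_abs_add_rpow_le (hab : a < b) (ha : a ≠ β) (hb : b ≠ β)
    (h : ∀ r > (0 : ℝ), |A * r ^ a + B * r ^ b| ≤ C * r ^ β) : A = 0 ∧ B = 0 := by
  rcases hb.lt_or_gt with hbβ | hβb
  · obtain rfl := eq_zero_of_abs_add_rpow_le_of_gt hab (hab.trans hbβ) h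
    exact ⟨rfl, eq_zero_of_abs_mul_rpow_le hb (by simpa using h)⟩
  · obtain rfl := eq_zero_of_abs_add_rpow_le_of_lt hab hβb h
    exact ⟨eq_zero_of_abs_mul_rpow_le ha (by simpa using h), rfl⟩

end PowerBounds

section Euler

variable {p q a b : ℝ} {u u' u'' : ℝ → ℝ}

lemma eq_mul_rpow_of_mul_deriv_eq {c : ℝ} {f f' : ℝ → ℝ}
    (hf : ∀ r > (0 : ℝ), HasDerivAt f (f' r) r) (h : ∀ r > (0 : ℝ), r * f' r = c * f r) :
    ∀ r > (0 : ℝ), f r = f 1 * r ^ c := by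
  have hderiv : ∀ r > (0 : ℝ), HasDerivAt (fun s => s ^ (-c) * f s) 0 r := by
    intro r hr
    refine ((hasDerivAt_rpow_const (p := -c) (Or.inl hr.ne')).fun_mul
      (hf r hr)).congr_deriv ?_
    rw [rpow_sub_one hr.ne']
    field_simp
    linear_combination r ^ (-c) * h r hr
  have hconst : ∀ r > (0 : ℝ), r ^ (-c) * f r = f 1 := fun r hr => by
    simpa using isOpen_Ioi.is_const_of_deriv_eq_zero isPreconnected_Ioi
      (fun x hx => (hderiv x hx).differentiableAt.differentiableWithinAt)
      (fun x hx => (hderiv x hx).deriv) (mem_Ioi.2 hr) (mem_Ioi.2 one_pos)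
  intro r hr
  rw [← hconst r hr, mul_comm (r ^ (-c)), mul_assoc, ← rpow_add hr, neg_add_cancel, rpow_zero,
    mul_one]

-- The Euler operator factors as `(r d/dr - a) (r d/dr - b)`.
lemma euler_eq_add_rpow (hab : a ≠ b) (hsum : a + b = 1 - p) (hprod : a * b = q)
    (hd1 : ∀ r > (0 : ℝ), HasDerivAt u (u' r) r) (hd2 : ∀ r > (0 : ℝ), HasDerivAt u' (u'' r) r)
    (heq : ∀ r > (0 : ℝ), r ^ 2 * u'' r + p * r * u' r + q * u r = 0) :
    ∃ A B : ℝ, ∀ r > (0 : ℝ), u r = A * r ^ a + B * r ^ b := by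
  have hv := eq_mul_rpow_of_mul_deriv_eq (f := fun r => r * u' r - b * u r) (c := a)
    (fun r hr =>
      ((hasDerivAt_id' r).fun_mul (hd2 r hr)).fun_sub ((hd1 r hr).const_mul b))
    (fun r hr => by linear_combination heq r hr - r * u' r * hsum + u r * hprod)
  set K := (u' 1 - b * u 1) / (a - b)
  have hab' : a - b ≠ 0 := sub_ne_zero.2 hab
  have hw := eq_mul_rpow_of_mul_deriv_eq (f := fun r => u r - K * r ^ a) (c := b)
    (fun r hr =>
      (hd1 r hr).sub ((hasDerivAt_rpow_const (p := a) (Or.inl hr.ne')).const_mul K))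
    (fun r hr => by
      have hvr : r * u' r - b * u r = (a - b) * K * r ^ a := by
        rw [hv r hr]; simp only [K]; field_simp
      rw [rpow_sub_one hr.ne']
      field_simp
      linear_combination hvr)
  refine ⟨K, u 1 - K, fun r hr => ?_⟩
  have := hw r hr
  simp only [one_rpow, mul_one] at this
  linarith

lemma euler_eq_zero_of_abs_le_rpow {β C : ℝ} (hdisc : 4 * q < (p - 1) ^ 2)
    (hβ : β ^ 2 + (p - 1) * β + q ≠ 0)
    (hd1 : ∀ r > (0 : ℝ), HasDerivAt u (u' r) r) (hd2 : ∀ r > (0 : ℝ), HasDerivAt u' (u'' r) r)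
    (heq : ∀ r > (0 : ℝ), r ^ 2 * u'' r + p * r * u' r + q * u r = 0)
    (hbd : ∀ r > (0 : ℝ), |u r| ≤ C * r ^ β) :
    ∀ r > (0 : ℝ), u r = 0 := by
  set s := √((p - 1) ^ 2 - 4 * q)
  have hs : 0 < s := sqrt_pos.2 (by linarith)
  have hs2 : s ^ 2 = (p - 1) ^ 2 - 4 * q := sq_sqrt (by linarith)
  have hne : ∀ x, x ^ 2 + (p - 1) * x + q = 0 → x ≠ β := fun x hx hxβ => hβ (hxβ ▸ hx)
  obtain ⟨A, B, hAB⟩ := euler_eq_add_rpow (a := (1 - p - s) / 2) (b := (1 - p + s) / 2)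
    (by linarith) (by ring) (by linear_combination -hs2 / 4) hd1 hd2 heq
  obtain ⟨rfl, rfl⟩ := eq_zero_of_abs_add_rpow_le (by linarith)
    (hne _ (by linear_combination hs2 / 4)) (hne _ (by linear_combination hs2 / 4))
    fun r hr => hAB r hr ▸ hbd r hr
  intro r hr
  simpa using hAB r hr

lemma trace_coupled_euler_eq_zero {ι : Type*} [Fintype ι] [DecidableEq ι] {β : ℝ}
    {g G' G'' : ι → ι → ℝ → ℝ} (hp : p ≠ 1) (hβ₀ : β ^ 2 + (p - 1) * β ≠ 0)
    (hβ : β ^ 2 + (p - 1) * β - 2 * Fintype.card ι ≠ 0)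
    (hg1 : ∀ i j, ∀ r > (0 : ℝ), HasDerivAt (g i j) (G' i j r) r)
    (hg2 : ∀ i j, ∀ r > (0 : ℝ), HasDerivAt (G' i j) (G'' i j r) r)
    (heq : ∀ i j, ∀ r > (0 : ℝ), r ^ 2 * G'' i j r + p * r * G' i j r
      - 2 * (if i = j then (1 : ℝ) else 0) * (∑ k, g k k r) = 0)
    (hbd : ∀ i j, ∀ r > (0 : ℝ), |g i j r| ≤ r ^ β) :
    ∀ i j, ∀ r > (0 : ℝ), g i j r = 0 := by
  have hp' : 0 < (p - 1) ^ 2 := sq_pos_of_ne_zero (sub_ne_zero.2 hp)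
  have htrace : ∀ r > (0 : ℝ), ∑ k, g k k r = 0 :=
    euler_eq_zero_of_abs_le_rpow (u := fun r => ∑ k, g k k r) (q := -(2 * Fintype.card ι))
      (C := Fintype.card ι)
      (by nlinarith [(Fintype.card ι).cast_nonneg (α := ℝ)]) (by rwa [← sub_eq_add_neg])
      (fun r hr => HasDerivAt.fun_sum fun k _ => hg1 k k r hr)
      (fun r hr => HasDerivAt.fun_sum fun k _ => hg2 k k r hr)
      (fun r hr => by
        have := Finset.sum_eq_zero fun k (_ : k ∈ Finset.univ) => heq k k r hr
        simp only [if_pos, Finset.sum_sub_distrib, Finset.sum_add_distrib, ← Finset.mul_sum,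
          Finset.sum_const, Finset.card_univ, nsmul_eq_mul] at this
        linear_combination this)
      (fun r hr => (Finset.abs_sum_le_sum_abs _ _).trans
        ((Finset.sum_le_sum fun k _ => hbd k k r hr).trans_eq (by simp)))
  intro i j
  exact euler_eq_zero_of_abs_le_rpow (q := 0) (C := 1) (by linarith) (by simpa using hβ₀)
    (hg1 i j) (hg2 i j) (fun r hr => by simpa [htrace r hr] using heq i j r hr)
    (fun r hr => by simpa using hbd i j r hr)

end Euler

theorem cusp_einstein_variation_vanishes_general (n : ℕ) (hn : 3 ≤ n)
    (h11 : ℝ → ℝ) (h1 : Fin (n - 1) → ℝ → ℝ) (h : Fin (n - 1) → Fin (n - 1) → ℝ → ℝ)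
    -- (I): the equation for r² h₁₁
    (F' F'' : ℝ → ℝ)
    (hF1 : ∀ r > (0 : ℝ), HasDerivAt (fun s => s ^ 2 * h11 s) (F' r) r)
    (hF2 : ∀ r > (0 : ℝ), HasDerivAt F' (F'' r) r)
    (hI : ∀ r > (0 : ℝ),
      r ^ 2 * F'' r + (n : ℝ) * r * F' r - 2 * ((n : ℝ) - 1) * (r ^ 2 * h11 r) = 0)
    -- (II): the equations for h_{1i}
    (h1' h1'' : Fin (n - 1) → ℝ → ℝ)
    (hd1 : ∀ i, ∀ r > (0 : ℝ), HasDerivAt (h1 i) (h1' i r) r)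
    (hd2 : ∀ i, ∀ r > (0 : ℝ), HasDerivAt (h1' i) (h1'' i r) r)
    (hII : ∀ i, ∀ r > (0 : ℝ),
      r ^ 2 * h1'' i r + (n : ℝ) * r * h1' i r - (n : ℝ) * h1 i r = 0)
    -- (III): the equations for r^{-2} h_{ij}
    (G' G'' : Fin (n - 1) → Fin (n - 1) → ℝ → ℝ)
    (hG1 : ∀ i j, ∀ r > (0 : ℝ), HasDerivAt (fun s => h i j s / s ^ 2) (G' i j r) r)
    (hG2 : ∀ i j, ∀ r > (0 : ℝ), HasDerivAt (G' i j) (G'' i j r) r)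
    (hIII : ∀ i j, ∀ r > (0 : ℝ),
      r ^ 2 * G'' i j r + (n : ℝ) * r * G' i j r
        - 2 * (if i = j then (1 : ℝ) else 0) * (∑ k, h k k r / r ^ 2) = 0)
    -- growth bounds: either |h| ≤ r^{0.1} everywhere, or |h| ≤ r^{-0.1} everywhere
    (hb : ((∀ r > (0 : ℝ), r ^ 2 * |h11 r| ≤ r ^ (0.1 : ℝ))
            ∧ (∀ i, ∀ r > (0 : ℝ), |h1 i r| ≤ r ^ (0.1 : ℝ))
            ∧ (∀ i j, ∀ r > (0 : ℝ), |h i j r| / r ^ 2 ≤ r ^ (0.1 : ℝ)))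
        ∨ ((∀ r > (0 : ℝ), r ^ 2 * |h11 r| ≤ r ^ (-0.1 : ℝ))
            ∧ (∀ i, ∀ r > (0 : ℝ), |h1 i r| ≤ r ^ (-0.1 : ℝ))
            ∧ (∀ i j, ∀ r > (0 : ℝ), |h i j r| / r ^ 2 ≤ r ^ (-0.1 : ℝ)))) :
    (∀ r > (0 : ℝ), h11 r = 0)
    ∧ (∀ i, ∀ r > (0 : ℝ), h1 i r = 0)
    ∧ (∀ i j, ∀ r > (0 : ℝ), h i j r = 0) := by
  obtain ⟨β, hβ, b11, b1, bh⟩ : ∃ β : ℝ, (β = 0.1 ∨ β = -0.1)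
      ∧ (∀ r > (0 : ℝ), r ^ 2 * |h11 r| ≤ r ^ β) ∧ (∀ i, ∀ r > (0 : ℝ), |h1 i r| ≤ r ^ β)
      ∧ (∀ i j, ∀ r > (0 : ℝ), |h i j r| / r ^ 2 ≤ r ^ β) := by
    rcases hb with ⟨b11, b1, bh⟩ | ⟨b11, b1, bh⟩
    exacts [⟨_, .inl rfl, b11, b1, bh⟩, ⟨_, .inr rfl, b11, b1, bh⟩]
  have hn' : (3 : ℝ) ≤ n := by exact_mod_cast hn
  have hβ₀ : β ^ 2 + (n - 1) * β ≠ 0 := by rcases hβ with rfl | rfl <;> intro <;> linarith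
  have hβq : ∀ q : ℝ, q ≤ 1 - n → β ^ 2 + (n - 1) * β + q ≠ 0 := by
    rcases hβ with rfl | rfl <;> intro q hq <;> intro <;> linarith
  refine ⟨fun r hr => ?_, fun i => ?_, fun i j r hr => ?_⟩
  · have := euler_eq_zero_of_abs_le_rpow (q := -(2 * (n - 1))) (C := 1) (by nlinarith)
      (hβq _ (by linarith)) hF1 hF2 (fun r hr => by linear_combination hI r hr)
      (fun r hr => by simpa [abs_mul] using b11 r hr) r hr
    simpa [hr.ne'] using this
  · exact euler_eq_zero_of_abs_le_rpow (q := -n) (C := 1) (by nlinarith) (hβq _ (by linarith))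
      (hd1 i) (hd2 i) (fun r hr => by linear_combination hII i r hr)
      (fun r hr => by simpa using b1 i r hr)
  · have := trace_coupled_euler_eq_zero (g := fun i j s => h i j s / s ^ 2) (by linarith) hβ₀
      (by simpa [Nat.cast_sub (by omega : 1 ≤ n), sub_eq_add_neg] using
        hβq (-(2 * (n - 1))) (by linarith))
      hG1 hG2 hIII (fun i j r hr => by simpa [abs_div] using bh i j r hr) i j r hr
    simpa [hr.ne'] using this

/-- **Vanishing of cusp Einstein variations with strict one-sided growth bounds.**
An `ℝ^{n-1}`-invariant solution of the linearized Einstein equation on the hyperbolic cusp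
(system (I)-(III) for `h₁₁`, `h_{1i}`, `h_{ij}`) satisfying `|h| ≤ r^{0.1}` for all `r > 0`,
or alternatively `|h| ≤ r^{-0.1}` for all `r > 0`, vanishes identically. -/
theorem cusp_einstein_variation_vanishes (n : ℕ) (hn : 3 ≤ n)
    (h11 : ℝ → ℝ) (h1 : Fin (n - 1) → ℝ → ℝ) (h : Fin (n - 1) → Fin (n - 1) → ℝ → ℝ)
    (hsym : ∀ i j, h i j = h j i)
    -- (I): the equation for r² h₁₁
    (F' F'' : ℝ → ℝ)
    (hF1 : ∀ r > (0 : ℝ), HasDerivAt (fun s => s ^ 2 * h11 s) (F' r) r)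
    (hF2 : ∀ r > (0 : ℝ), HasDerivAt F' (F'' r) r)
    (hI : ∀ r > (0 : ℝ),
      r ^ 2 * F'' r + (n : ℝ) * r * F' r - 2 * ((n : ℝ) - 1) * (r ^ 2 * h11 r) = 0)
    -- (II): the equations for h_{1i}
    (h1' h1'' : Fin (n - 1) → ℝ → ℝ)
    (hd1 : ∀ i, ∀ r > (0 : ℝ), HasDerivAt (h1 i) (h1' i r) r)
    (hd2 : ∀ i, ∀ r > (0 : ℝ), HasDerivAt (h1' i) (h1'' i r) r)
    (hII : ∀ i, ∀ r > (0 : ℝ),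
      r ^ 2 * h1'' i r + (n : ℝ) * r * h1' i r - (n : ℝ) * h1 i r = 0)
    -- (III): the equations for r^{-2} h_{ij}
    (G' G'' : Fin (n - 1) → Fin (n - 1) → ℝ → ℝ)
    (hG1 : ∀ i j, ∀ r > (0 : ℝ), HasDerivAt (fun s => h i j s / s ^ 2) (G' i j r) r)
    (hG2 : ∀ i j, ∀ r > (0 : ℝ), HasDerivAt (G' i j) (G'' i j r) r)
    (hIII : ∀ i j, ∀ r > (0 : ℝ),
      r ^ 2 * G'' i j r + (n : ℝ) * r * G' i j r
        - 2 * (if i = j then (1 : ℝ) else 0) * (∑ k, h k k r / r ^ 2) = 0)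
    -- growth bounds: either |h| ≤ r^{0.1} everywhere, or |h| ≤ r^{-0.1} everywhere
    (hb : ((∀ r > (0 : ℝ), r ^ 2 * |h11 r| ≤ r ^ (0.1 : ℝ))
            ∧ (∀ i, ∀ r > (0 : ℝ), |h1 i r| ≤ r ^ (0.1 : ℝ))
            ∧ (∀ i j, ∀ r > (0 : ℝ), |h i j r| / r ^ 2 ≤ r ^ (0.1 : ℝ)))
        ∨ ((∀ r > (0 : ℝ), r ^ 2 * |h11 r| ≤ r ^ (-0.1 : ℝ))
            ∧ (∀ i, ∀ r > (0 : ℝ), |h1 i r| ≤ r ^ (-0.1 : ℝ))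
            ∧ (∀ i j, ∀ r > (0 : ℝ), |h i j r| / r ^ 2 ≤ r ^ (-0.1 : ℝ)))) :
    (∀ r > (0 : ℝ), h11 r = 0)
    ∧ (∀ i, ∀ r > (0 : ℝ), h1 i r = 0)
    ∧ (∀ i j, ∀ r > (0 : ℝ), h i j r = 0) :=
  cusp_einstein_variation_vanishes_general n hn h11 h1 h F' F'' hF1 hF2 hI h1' h1'' hd1 hd2 hII G'
    G'' hG1 hG2 hIII hb
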